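/- Let M > 0 and S = {λ ∈ ℂ : |Re λ| ≤ M and |Im λ| ≤ M}. Let θ : C(S, ℂ) → ℂ be a generalized distribution: additive, conjugate-homogeneous (θ(c • f) = conj(c)·θ(f)), and bounded by K ≥ 0 with respect to the sup norm. Let D be an ultrafilter on ℕ, μ_N(X) = Σ_{k : λ_N(k) ∈ X} ξ_N(k)² weighted counting set functions with ξ_N(k) ≥ 0 and Σ_k ξ_N(k)² = 1, and ν : Set ℂ → ℝ a function such that for every X ⊆ ℂ, N ↦ μ_N(X) tends to ν(X) along D. For r ∈ ℝ and ε > 0 let I_r^ε = {λ ∈ ℂ : |Re λ − r| < ε}. Say I_r is good for θ if for every δ > 0 there is ε > 0 such that |θ(f)| < δ for every f ∈ C(S, ℂ) with ‖f‖ ≤ 1 vanishing at every x ∈ S with |Re x − r| ≥ ε; say I_r is very good if it is good for θ and, in addition, for every δ > 0 there is ε > 0 with ν(I_r^ε) < δ. Then the set {r ∈ [−M, M] : I_r is not very good} is countable; likewise for the horizontal lines J_r (with Im in place of Re). -/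

import Mathlib

/-!
Call a level `r` δ-bad if every strip `|p - r| < ε` around it carries an `f` with `‖f‖ ≤ 1` and
`‖θ f‖ ≥ δ` (resp. has `ν`-mass at least δ). Around finitely many levels the strips are pairwise
disjoint once ε is small. For `θ`, the witnesses `f_r` then have disjoint supports, so after
multiplying each by the phase of `θ f_r` their sum still has sup norm at most 1, while `θ` of it is
`∑ ‖θ f_r‖ ≥ #T δ`; hence there are at most `K / δ` δ-bad levels. For `ν`, each `μ_N` gives
disjoint strips total mass at most `∑ ξ_N(k)² = 1`, and this bound passes to the limit. A bad
level is `1 / (n + 1)`-bad for some `n`, so the bad levels form a countable union of finite sets.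
-/

/-- The closed square `S = {λ : |Re λ| ≤ M, |Im λ| ≤ M}`. -/
def Sq (M : ℝ) : Set ℂ := {z : ℂ | |z.re| ≤ M ∧ |z.im| ≤ M}

theorem isCompact_Sq (M : ℝ) : IsCompact (Sq M) := by
  apply Metric.isCompact_of_isClosed_isBounded
  · exact (isClosed_le (Complex.continuous_re.abs) continuous_const).inter
      (isClosed_le (Complex.continuous_im.abs) continuous_const)
  · apply (Metric.isBounded_closedBall (x := (0 : ℂ)) (r := M + M)).subset
    intro z hz
    simp only [Metric.mem_closedBall, dist_zero_right]
    calc ‖z‖ ≤ |z.re| + |z.im| := Complex.norm_le_abs_re_add_abs_im z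
      _ ≤ M + M := add_le_add hz.1 hz.2

instance (M : ℝ) : CompactSpace (Sq M) := isCompact_iff_compactSpace.mp (isCompact_Sq M)

/-- The weighted counting set function `μ_N(X) = Σ_{k : λ_N(k) ∈ X} ξ_N(k)²`. -/
noncomputable def countMeasure {n : ℕ} (lam : Fin n → ℂ) (xi : Fin n → ℝ) (X : Set ℂ) : ℝ :=
  ∑ k : Fin n, Set.indicator X (fun _ => xi k ^ 2) (lam k)

/-- The line `I_r` (resp. `J_r`) is good for `θ`. -/
def GoodLine (M : ℝ) (θ : C(Sq M, ℂ) → ℂ) (re : Bool) (r : ℝ) : Prop :=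
  ∀ δ > (0 : ℝ), ∃ ε > (0 : ℝ), ∀ f : C(Sq M, ℂ), ‖f‖ ≤ 1 →
    (∀ x : Sq M, ε ≤ |(if re then (x : ℂ).re else (x : ℂ).im) - r| → f x = 0) →
    ‖θ f‖ < δ

/-- The line `I_r` (resp. `J_r`) is very good for `θ`: it is good for `θ`, and in
addition the `ν`-value of the strip `{λ : |Re λ − r| < ε}` (resp. with `Im`) can be
made arbitrarily small. -/
def VeryGoodLine (M : ℝ) (θ : C(Sq M, ℂ) → ℂ) (ν : Set ℂ → ℝ) (re : Bool) (r : ℝ) : Prop :=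
  GoodLine M θ re r ∧
  ∀ δ > (0 : ℝ), ∃ ε > (0 : ℝ),
    ν {z : ℂ | |(if re then z.re else z.im) - r| < ε} < δ

open Metric Filter Topology Set Function

section Separation

variable {α : Type*} [MetricSpace α]

theorem Finset.exists_pos_pairwiseDisjoint_ball (T : Finset α) :
    ∃ ε > 0, (T : Set α).PairwiseDisjoint (ball · ε) := by
  have hsep : ∀ᶠ ε in 𝓝[>] (0 : ℝ), ∀ p ∈ T.offDiag, ε + ε ≤ dist p.1 p.2 := by
    refine (eventually_all_finset _).2 fun p hp => ?_
    have hdist : 0 < dist p.1 p.2 := dist_pos.2 (Finset.mem_offDiag.1 hp).2.2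
    have hdouble : Tendsto (fun ε : ℝ => ε + ε) (𝓝[>] 0) (𝓝 0) :=
      ((continuous_id.add continuous_id).tendsto' 0 0 (add_zero 0)).mono_left nhdsWithin_le_nhds
    exact hdouble.eventually (ge_mem_nhds hdist)
  obtain ⟨ε, hε, hε0⟩ := (hsep.and self_mem_nhdsWithin).exists
  exact ⟨ε, hε0, fun x hx y hy hxy =>
    ball_disjoint_ball (hε (x, y) (Finset.mem_offDiag.2 ⟨hx, hy, hxy⟩))⟩

theorem finite_setOf_forall_pos_of_card_mul_le {P : α → ℝ → Prop} {δ C : ℝ} (hδ : 0 < δ)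
    (h : ∀ ε > 0, ∀ T : Finset α, (∀ r ∈ T, P r ε) →
      (T : Set α).PairwiseDisjoint (ball · ε) → T.card * δ ≤ C) :
    {r | ∀ ε > 0, P r ε}.Finite := by
  by_contra hinf
  obtain ⟨T, hTP, hcard⟩ := Set.Infinite.exists_subset_card_eq hinf (⌈C / δ⌉₊ + 1)
  obtain ⟨ε, hε, hdisj⟩ := T.exists_pos_pairwiseDisjoint_ball
  have hle := h ε hε T (fun r hr => hTP hr ε hε) hdisj
  rw [hcard, Nat.cast_add_one] at hle
  have hceil := (div_le_iff₀ hδ).1 (Nat.le_ceil (C / δ))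
  linarith

end Separation

theorem countable_setOf_exists_pos_of_finite {α : Type*} {P : ℝ → α → Prop}
    (hanti : ∀ ⦃δ δ'⦄, δ ≤ δ' → ∀ x, P δ' x → P δ x) (hfin : ∀ δ > 0, {x | P δ x}.Finite) :
    {x | ∃ δ > 0, P δ x}.Countable := by
  refine (countable_iUnion fun n : ℕ => (hfin _ (Nat.one_div_pos_of_nat (n := n))).countable).mono ?_
  rintro x ⟨δ, hδ, hx⟩
  obtain ⟨n, hn⟩ := exists_nat_one_div_lt hδ
  exact mem_iUnion.2 ⟨n, hanti hn.le x hx⟩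

theorem ContinuousMap.norm_sum_smul_le_one {X 𝕜 E ι : Type*} [TopologicalSpace X]
    [CompactSpace X] [NormedField 𝕜] [NormedAddCommGroup E] [NormedSpace 𝕜 E]
    (T : Finset ι) (c : ι → 𝕜) (f : ι → C(X, E)) (hc : ∀ i ∈ T, ‖c i‖ ≤ 1)
    (hf : ∀ i ∈ T, ‖f i‖ ≤ 1) (hdisj : (T : Set ι).PairwiseDisjoint fun i => support (f i)) :
    ‖∑ i ∈ T, c i • f i‖ ≤ 1 := by
  refine (ContinuousMap.norm_le _ zero_le_one).2 fun x => ?_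
  simp only [ContinuousMap.sum_apply, ContinuousMap.smul_apply]
  by_cases hx : ∃ i ∈ T, f i x ≠ 0
  · obtain ⟨i, hi, hfx⟩ := hx
    rw [Finset.sum_eq_single_of_mem i hi fun j hj hji => ?_]
    · exact (norm_smul _ _).trans_le
        (mul_le_one₀ (hc i hi) (norm_nonneg _) (((f i).norm_coe_le_norm x).trans (hf i hi)))
    · rw [notMem_support.1 fun hjx => Set.disjoint_left.1 (hdisj hj hi hji) hjx hfx, smul_zero]
  · push Not at hx
    rw [Finset.sum_eq_zero fun i hi => by rw [hx i hi, smul_zero], norm_zero]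
    exact zero_le_one

theorem Complex.conj_div_norm_mul_self (z : ℂ) : starRingEnd ℂ (z / ‖z‖) * z = ‖z‖ := by
  rcases eq_or_ne z 0 with rfl | hz
  · simp
  rw [map_div₀, Complex.conj_ofReal, div_mul_eq_mul_div, Complex.conj_mul', pow_two,
    mul_div_assoc, div_self (by simpa using hz), mul_one]

section Distribution

variable {X : Type*} [TopologicalSpace X] [CompactSpace X]

theorem sum_norm_le_of_pairwiseDisjoint_support {θ : C(X, ℂ) → ℂ} {K : ℝ}
    (hadd : ∀ f g, θ (f + g) = θ f + θ g)
    (hsmul : ∀ (c : ℂ) (f), θ (c • f) = (starRingEnd ℂ) c * θ f)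
    (hK : 0 ≤ K) (hbound : ∀ f, ‖θ f‖ ≤ K * ‖f‖) {ι : Type*} (T : Finset ι)
    (f : ι → C(X, ℂ)) (hf : ∀ i ∈ T, ‖f i‖ ≤ 1)
    (hdisj : (T : Set ι).PairwiseDisjoint fun i => support (f i)) :
    ∑ i ∈ T, ‖θ (f i)‖ ≤ K := by
  set phase : ι → ℂ := fun i => θ (f i) / ‖θ (f i)‖
  have hphase : ∀ i ∈ T, ‖phase i‖ ≤ 1 := fun i _ => by
    simp only [phase, norm_div, Complex.norm_real, norm_norm]
    exact div_self_le_one _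
  have hrotate : θ (∑ i ∈ T, phase i • f i) = ((∑ i ∈ T, ‖θ (f i)‖ : ℝ) : ℂ) := by
    refine (map_sum (AddMonoidHom.mk' θ hadd) (fun i => phase i • f i) T).trans ?_
    rw [Complex.ofReal_sum]
    exact Finset.sum_congr rfl fun i _ => by
      rw [AddMonoidHom.mk'_apply, hsmul, Complex.conj_div_norm_mul_self]
  calc ∑ i ∈ T, ‖θ (f i)‖ = ‖θ (∑ i ∈ T, phase i • f i)‖ := by
        rw [hrotate, Complex.norm_real, Real.norm_of_nonneg (by positivity)]
    _ ≤ K * ‖∑ i ∈ T, phase i • f i‖ := hbound _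
    _ ≤ K * 1 := by gcongr; exact ContinuousMap.norm_sum_smul_le_one T phase f hphase hf hdisj
    _ = K := mul_one K

def GoodLevel (θ : C(X, ℂ) → ℂ) (p : X → ℝ) (r : ℝ) : Prop :=
  ∀ δ > (0 : ℝ), ∃ ε > (0 : ℝ), ∀ f : C(X, ℂ), ‖f‖ ≤ 1 →
    (∀ x, ε ≤ |p x - r| → f x = 0) → ‖θ f‖ < δ

theorem countable_setOf_not_goodLevel {θ : C(X, ℂ) → ℂ} {K : ℝ}
    (hadd : ∀ f g, θ (f + g) = θ f + θ g)
    (hsmul : ∀ (c : ℂ) (f), θ (c • f) = (starRingEnd ℂ) c * θ f)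
    (hK : 0 ≤ K) (hbound : ∀ f, ‖θ f‖ ≤ K * ‖f‖) (p : X → ℝ) :
    {r | ¬ GoodLevel θ p r}.Countable := by
  refine (countable_setOf_exists_pos_of_finite (P := fun δ r => ∀ ε > 0, ∃ f : C(X, ℂ),
    ‖f‖ ≤ 1 ∧ (∀ x, ε ≤ |p x - r| → f x = 0) ∧ δ ≤ ‖θ f‖) ?_ ?_).mono ?_
  · intro δ δ' hδ r hr ε hε
    obtain ⟨f, hf, hvanish, hθf⟩ := hr ε hε
    exact ⟨f, hf, hvanish, hδ.trans hθf⟩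
  · intro δ hδ
    refine finite_setOf_forall_pos_of_card_mul_le (C := K) hδ fun ε _ T hT hdisj => ?_
    choose! f hf hvanish hθf using hT
    have hsupport : ∀ r ∈ T, support (f r) ⊆ p ⁻¹' ball r ε :=
      fun r hr x hx => not_le.1 fun hfar => hx (hvanish r hr x hfar)
    calc T.card * δ = ∑ r ∈ T, δ := by rw [Finset.sum_const, nsmul_eq_mul]
      _ ≤ ∑ r ∈ T, ‖θ (f r)‖ := Finset.sum_le_sum hθf
      _ ≤ K := sum_norm_le_of_pairwiseDisjoint_support hadd hsmul hK hbound T f hf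
        fun r hr s hs hrs => ((hdisj hr hs hrs).preimage p).mono (hsupport r hr) (hsupport s hs)
  · intro r (hr : ¬ GoodLevel θ p r)
    unfold GoodLevel at hr
    push Not at hr
    exact hr

end Distribution

theorem sum_countMeasure_le_of_pairwiseDisjoint {n : ℕ} (lam : Fin n → ℂ) (xi : Fin n → ℝ)
    {ι : Type*} (T : Finset ι) (S : ι → Set ℂ) (hS : (T : Set ι).PairwiseDisjoint S) :
    ∑ i ∈ T, countMeasure lam xi (S i) ≤ ∑ k, xi k ^ 2 := by
  unfold countMeasure
  rw [Finset.sum_comm]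
  refine Finset.sum_le_sum fun k _ => ?_
  rw [← Finset.indicator_biUnion_apply T S hS]
  exact Set.indicator_le_self' (fun _ _ => sq_nonneg _) _

theorem sum_le_one_of_tendsto_countMeasure {l : Filter ℕ} [l.NeBot] {DN : ℕ → ℕ}
    {lam : ∀ N, Fin (DN N) → ℂ} {xi : ∀ N, Fin (DN N) → ℝ}
    (hsum : ∀ N, ∑ k : Fin (DN N), xi N k ^ 2 = 1) {ν : Set ℂ → ℝ}
    (hν : ∀ S : Set ℂ, Tendsto (fun N => countMeasure (lam N) (xi N) S) l (𝓝 (ν S)))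
    {ι : Type*} (T : Finset ι) (S : ι → Set ℂ) (hS : (T : Set ι).PairwiseDisjoint S) :
    ∑ i ∈ T, ν (S i) ≤ 1 :=
  le_of_tendsto (tendsto_finsetSum T fun i _ => hν (S i)) (Eventually.of_forall fun N =>
    hsum N ▸ sum_countMeasure_le_of_pairwiseDisjoint (lam N) (xi N) T S hS)

def VanishesNearLevel {α : Type*} (ν : Set α → ℝ) (p : α → ℝ) (r : ℝ) : Prop :=
  ∀ δ > (0 : ℝ), ∃ ε > (0 : ℝ), ν {x | |p x - r| < ε} < δ

theorem countable_setOf_not_vanishesNearLevel {α : Type*} {ν : Set α → ℝ} {C : ℝ}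
    (hν : ∀ (T : Finset ℝ) (S : ℝ → Set α), (T : Set ℝ).PairwiseDisjoint S →
      ∑ r ∈ T, ν (S r) ≤ C) (p : α → ℝ) :
    {r | ¬ VanishesNearLevel ν p r}.Countable := by
  refine (countable_setOf_exists_pos_of_finite
    (P := fun δ r => ∀ ε > 0, δ ≤ ν {x | |p x - r| < ε}) ?_ ?_).mono ?_
  · exact fun δ δ' hδ r hr ε hε => hδ.trans (hr ε hε)
  · intro δ hδ
    refine finite_setOf_forall_pos_of_card_mul_le (C := C) hδ fun ε _ T hT hdisj => ?_
    calc T.card * δ = ∑ r ∈ T, δ := by rw [Finset.sum_const, nsmul_eq_mul]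
      _ ≤ ∑ r ∈ T, ν (p ⁻¹' ball r ε) := Finset.sum_le_sum hT
      _ ≤ C := hν T _ fun r hr s hs hrs => (hdisj hr hs hrs).preimage p
  · intro r (hr : ¬ VanishesNearLevel ν p r)
    unfold VanishesNearLevel at hr
    push Not at hr
    exact hr

theorem stmt12
    (M : ℝ)
    (θ : C(Sq M, ℂ) → ℂ)
    (hadd : ∀ f g, θ (f + g) = θ f + θ g)
    (hsmul : ∀ (c : ℂ) (f), θ (c • f) = (starRingEnd ℂ) c * θ f)
    (K : ℝ) (hK : 0 ≤ K)
    (hbound : ∀ f, ‖θ f‖ ≤ K * ‖f‖)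
    (D : Ultrafilter ℕ)
    (DN : ℕ → ℕ) (lam : ∀ N, Fin (DN N) → ℂ) (xi : ∀ N, Fin (DN N) → ℝ)
    (hsum : ∀ N, ∑ k : Fin (DN N), xi N k ^ 2 = 1)
    (ν : Set ℂ → ℝ)
    (hν : ∀ X : Set ℂ,
      Filter.Tendsto (fun N => countMeasure (lam N) (xi N) X) (D : Filter ℕ) (nhds (ν X))) :
    {r ∈ Set.Icc (-M) M | ¬ VeryGoodLine M θ ν true r}.Countable ∧
    {r ∈ Set.Icc (-M) M | ¬ VeryGoodLine M θ ν false r}.Countable := by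
  suffices h : ∀ re, {r ∈ Set.Icc (-M) M | ¬ VeryGoodLine M θ ν re r}.Countable from
    ⟨h true, h false⟩
  intro re
  have hgood := countable_setOf_not_goodLevel hadd hsmul hK hbound
    fun x : Sq M => if re then (x : ℂ).re else (x : ℂ).im
  have hvanish := countable_setOf_not_vanishesNearLevel
    (sum_le_one_of_tendsto_countMeasure hsum hν) fun z : ℂ => if re then z.re else z.im
  exact (hgood.union hvanish).mono fun r hr => not_and_or.1 hr.2
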